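/- Let P1, P2 ∈ [0,1] and let q1, q2 be positive integers. Define the packet drop probability of the two-hop semi-cumulative strategy as pdp_SC = P1^{q1} + ∑_{i=1}^{q1} (1−P1)·P1^{i−1}·P2^{q2 + q1 − i}, and the packet drop probability of the two-hop non-cooperative strategy as pdp_NC = 1 − (1 − P1^{q1})(1 − P2^{q2}). Then pdp_SC ≤ pdp_NC. -/

import Mathlib

/-- Two-hop semi-cumulative packet drop probability. -/
noncomputable def pdpSC (P1 P2 : ℝ) (q1 q2 : ℕ) : ℝ :=
  P1 ^ q1 + ∑ i ∈ Finset.Icc 1 q1, (1 - P1) * P1 ^ (i - 1) * P2 ^ (q2 + q1 - i)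

/-- Two-hop non-cooperative packet drop probability. -/
noncomputable def pdpNC (P1 P2 : ℝ) (q1 q2 : ℕ) : ℝ :=
  1 - (1 - P1 ^ q1) * (1 - P2 ^ q2)

/-!
Node 2 inherits at least zero extra attempts, so each term `P2 ^ (q2 + q1 - i)` of `pdpSC` is at
most `P2 ^ q2`. Replacing them, the sum over `i` telescopes to the probability `1 - P1 ^ q1` that
node 1 succeeds, and `P1 ^ q1 + (1 - P1 ^ q1) * P2 ^ q2` is exactly `pdpNC`.
-/

theorem sum_Icc_one_sub_mul_pow_pred {R : Type*} [CommRing R] (x : R) (n : ℕ) :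
    ∑ i ∈ Finset.Icc 1 n, (1 - x) * x ^ (i - 1) = 1 - x ^ n := by
  rw [← Finset.Ico_add_one_right_eq_Icc, Finset.sum_Ico_eq_sum_range, ← mul_neg_geom_sum,
    Finset.mul_sum]
  simp

theorem pdpNC_eq_add_mul (P1 P2 : ℝ) (q1 q2 : ℕ) :
    pdpNC P1 P2 q1 q2 = P1 ^ q1 + (1 - P1 ^ q1) * P2 ^ q2 := by
  unfold pdpNC
  ring

theorem pdpSC_le_pdpNC_general (P1 P2 : ℝ) (hP1 : P1 ∈ Set.Icc (0:ℝ) 1) (hP2 : P2 ∈ Set.Icc (0:ℝ) 1)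
    (q1 q2 : ℕ) :
    pdpSC P1 P2 q1 q2 ≤ pdpNC P1 P2 q1 q2 := by
  obtain ⟨hP1_nonneg, hP1_le_one⟩ := hP1
  obtain ⟨hP2_nonneg, hP2_le_one⟩ := hP2
  calc pdpSC P1 P2 q1 q2
      = P1 ^ q1 + ∑ i ∈ Finset.Icc 1 q1, (1 - P1) * P1 ^ (i - 1) * P2 ^ (q2 + q1 - i) := rfl
    _ ≤ P1 ^ q1 + ∑ i ∈ Finset.Icc 1 q1, (1 - P1) * P1 ^ (i - 1) * P2 ^ q2 := by
        gcongr 1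
        refine Finset.sum_le_sum fun i hi => mul_le_mul_of_nonneg_left ?_ ?_
        · exact pow_le_pow_of_le_one hP2_nonneg hP2_le_one (by grind)
        · exact mul_nonneg (sub_nonneg.2 hP1_le_one) (pow_nonneg hP1_nonneg _)
    _ = pdpNC P1 P2 q1 q2 := by
        rw [← Finset.sum_mul, sum_Icc_one_sub_mul_pow_pred, pdpNC_eq_add_mul]

/-- The semi-cumulative strategy never has a larger packet drop probability than
the non-cooperative strategy in a two-hop network. -/
theorem pdpSC_le_pdpNC (P1 P2 : ℝ) (hP1 : P1 ∈ Set.Icc (0:ℝ) 1) (hP2 : P2 ∈ Set.Icc (0:ℝ) 1)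
    (q1 q2 : ℕ) (hq1 : 0 < q1) (hq2 : 0 < q2) :
    pdpSC P1 P2 q1 q2 ≤ pdpNC P1 P2 q1 q2 :=
  pdpSC_le_pdpNC_general P1 P2 hP1 hP2 q1 q2
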